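/- Let G be a chordal graph and I ⊆ V(G). Then the graph G′ obtained from G by deleting all edges between vertices of I has no induced odd cycle of length at least 5 (no odd hole). -/

import Mathlib

open SimpleGraph

variable {V : Type*}

/-- Number of connected components of a graph. -/
noncomputable def numComponents (G : SimpleGraph V) : ℕ := Nat.card G.ConnectedComponent

/-- A vertex is a cut vertex if its removal increases the number of connected components. -/
def IsCutVertex (G : SimpleGraph V) (v : V) : Prop :=
  numComponents G < numComponents (G.induce {u | u ≠ v})

/-- `T` is a spanning tree of `G`: a subgraph on all vertices of `G` that is a tree. -/
def IsSpanningTree (G T : SimpleGraph V) : Prop := T ≤ G ∧ T.IsTree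

/-- `v` is dominated by `S` in the graph `T`. -/
def DominatedIn (T : SimpleGraph V) (S : Set V) (v : V) : Prop :=
  v ∈ S ∨ ∃ u ∈ S, T.Adj v u

/-- `v` is simultaneously dominated by `S`: dominated in every spanning tree of `G`. -/
def SimDominated (G : SimpleGraph V) (S : Set V) (v : V) : Prop :=
  ∀ T : SimpleGraph V, IsSpanningTree G T → DominatedIn T S v

/-- `S` is a simultaneous dominating set of `G`. -/
def IsSDSet (G : SimpleGraph V) (S : Set V) : Prop := ∀ v, SimDominated G S v

/-- `C` is a vertex cover of `G`. -/
def IsVertexCover (G : SimpleGraph V) (C : Set V) : Prop :=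
  ∀ ⦃u v : V⦄, G.Adj u v → u ∈ C ∨ v ∈ C

/-- A block of `G`: a maximal vertex set inducing a connected subgraph without cut vertices. -/
def IsBlock (G : SimpleGraph V) (B : Set V) : Prop :=
  B.Nonempty ∧ (G.induce B).Connected ∧ (∀ x, ¬ IsCutVertex (G.induce B) x) ∧
    ∀ B' : Set V, B ⊆ B' → (G.induce B').Connected →
      (∀ x, ¬ IsCutVertex (G.induce B') x) → B' = B

/-- 2-connected: connected, at least 3 vertices, no cut vertex. -/
def TwoConnected (G : SimpleGraph V) [Fintype V] : Prop :=
  G.Connected ∧ 3 ≤ Fintype.card V ∧ ∀ v, ¬ IsCutVertex G v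

/-- Colours 1, 0, 0̂. -/
inductive Col : Type
  | one | zero | zhat
deriving DecidableEq

/-- `S` is an `f`-respecting simultaneous dominating set of `G`. -/
def RespSDS (G : SimpleGraph V) (f : V → Col) (S : Set V) : Prop :=
  (∀ v, f v = Col.one → v ∈ S) ∧ ∀ v, f v = Col.zhat → SimDominated G S v

/-- A minimum `f`-respecting simultaneous dominating set. -/
def MinRespSDS (G : SimpleGraph V) (f : V → Col) (S : Set V) : Prop :=
  RespSDS G f S ∧ ∀ S' : Set V, RespSDS G f S' → S.ncard ≤ S'.ncard

/-- A graph is chordal iff it has no induced cycle of length at least 4. -/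
def IsChordal (G : SimpleGraph V) : Prop :=
  ∀ n : ℕ, 4 ≤ n → IsEmpty (SimpleGraph.cycleGraph n ↪g G)

/-- `G − E(G[I])`: delete all edges between vertices of `I`. -/
def removeInside (G : SimpleGraph V) (I : Set V) : SimpleGraph V where
  Adj u w := G.Adj u w ∧ ¬(u ∈ I ∧ w ∈ I)
  symm := ⟨fun u w ⟨h, h'⟩ => ⟨h.symm, fun ⟨a, b⟩ => h' ⟨b, a⟩⟩⟩
  loopless := ⟨fun u h => G.loopless.irrefl u h.1⟩

/-- `G` has an odd hole: an induced cycle of odd length at least 5. -/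
def HasOddHole (G : SimpleGraph V) : Prop :=
  ∃ n : ℕ, 5 ≤ n ∧ Odd n ∧ Nonempty (SimpleGraph.cycleGraph n ↪g G)

/-- Perfect graph, via the strong perfect graph theorem characterization:
no odd hole and no odd antihole (an odd antihole of `G` is an odd hole of `Gᶜ`). -/
def IsPerfect (G : SimpleGraph V) : Prop := ¬ HasOddHole G ∧ ¬ HasOddHole Gᶜ

/-!
In a chordal graph, every cycle of length at least four has a chord at one of the two ends of any
prescribed edge: otherwise shortcut the cycle along a chord avoiding both ends and induct on the
length. In an odd hole of `removeInside G I`, every chord in `G` has both ends in `I` while no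
edge of the hole does, so every edge of the hole has exactly one end in `I`: membership in `I`
would 2-colour an odd cycle.
-/

open Fin.NatCast

lemma cycleGraph_adj_add_left {n : ℕ} [NeZero n] (a u v : Fin n) :
    (cycleGraph n).Adj (a + u) (a + v) ↔ (cycleGraph n).Adj u v := by
  simp only [cycleGraph_adj', add_sub_add_left_eq_sub]

/-- Positions `s < t` of the polygon with vertices `0, 1, …, l` that are not joined by a side. -/
def IsDiagonal (l s t : ℕ) : Prop := s + 2 ≤ t ∧ t ≤ l ∧ ¬(s = 0 ∧ t = l)

lemma IsDiagonal.strictMono_map {f : ℕ → ℕ} (hf : StrictMono f) {l' l a b : ℕ} (hfl : f l' = l)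
    (h : IsDiagonal l' a b) : IsDiagonal l (f a) (f b) := by
  obtain ⟨hab, hbl, hend⟩ := h
  refine ⟨?_, hfl ▸ hf.monotone hbl, fun ⟨ha, hb⟩ => hend ⟨?_, hf.injective (hb.trans hfl.symm)⟩⟩
  · have := hf (show a < a + 1 by omega)
    have := hf (show a + 1 < b by omega)
    omega
  · have := hf.id_le a
    simp only [id, ha] at this
    omega

lemma cycleGraph_adj_natCast_iff {n s t : ℕ} [NeZero n] (hst : s < t) (ht : t < n) :
    (cycleGraph n).Adj (s : Fin n) (t : Fin n) ↔ ¬IsDiagonal (n - 1) s t := by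
  have hs' : (s : Fin n).val = s := Fin.val_cast_of_lt (hst.trans ht)
  have ht' : (t : Fin n).val = t := Fin.val_cast_of_lt ht
  have hlt : (s : Fin n) < t := by rw [Fin.lt_def, hs', ht']; exact hst
  rw [cycleGraph_adj', Fin.coe_sub_iff_lt.2 hlt, Fin.sub_val_of_le hlt.le, hs', ht', IsDiagonal]
  omega

/-- The cycle `w 0, w 1, …, w l, w 0` of length `l + 1`. -/
structure IsCycleSeq (G : SimpleGraph V) (w : ℕ → V) (l : ℕ) : Prop where
  injOn : Set.InjOn w (Set.Iic l)
  adj_succ : ∀ s < l, G.Adj (w s) (w (s + 1))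
  adj_last : G.Adj (w l) (w 0)

namespace IsCycleSeq

variable {G H : SimpleGraph V} {w : ℕ → V} {l : ℕ}

lemma mono (hGH : G ≤ H) (hw : IsCycleSeq G w l) : IsCycleSeq H w l :=
  ⟨hw.injOn, fun s hs => hGH (hw.adj_succ s hs), hGH hw.adj_last⟩

lemma adj_of_not_isDiagonal (hw : IsCycleSeq G w l) {s t : ℕ} (hst : s < t) (ht : t ≤ l)
    (h : ¬IsDiagonal l s t) : G.Adj (w s) (w t) := by
  obtain rfl | ⟨rfl, rfl⟩ : t = s + 1 ∨ (s = 0 ∧ t = l) := by unfold IsDiagonal at h; omega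
  · exact hw.adj_succ s (by omega)
  · exact hw.adj_last.symm

lemma comp_strictMono (hw : IsCycleSeq G w l) {f : ℕ → ℕ} {l' : ℕ} (hf : StrictMono f)
    (hf0 : f 0 = 0) (hfl : f l' = l)
    (hstep : ∀ u < l', f (u + 1) = f u + 1 ∨ G.Adj (w (f u)) (w (f (u + 1)))) :
    IsCycleSeq G (w ∘ f) l' where
  injOn a ha b hb hab :=
    hf.injective (hw.injOn (hfl ▸ hf.monotone ha) (hfl ▸ hf.monotone hb) hab)
  adj_succ u hu := (hstep u hu).elim
    (fun h => by simpa only [Function.comp, h] using hw.adj_succ (f u) (hfl ▸ hf hu)) id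
  adj_last := by simpa only [Function.comp, hf0, hfl] using hw.adj_last

end IsCycleSeq

namespace IsChordal

variable {G : SimpleGraph V}

lemma exists_chord (hG : IsChordal G) {w : ℕ → V} {l : ℕ} (hw : IsCycleSeq G w l) (hl : 3 ≤ l) :
    ∃ s t, IsDiagonal l s t ∧ G.Adj (w s) (w t) := by
  by_contra! hchord
  have hadj_iff : ∀ {s t : ℕ}, s < t → t ≤ l → (G.Adj (w s) (w t) ↔ ¬IsDiagonal l s t) :=
    fun hst ht => ⟨fun h hd => hchord _ _ hd h, hw.adj_of_not_isDiagonal hst ht⟩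
  refine (hG (l + 1) (by omega)).false
    ⟨⟨fun j => w j, fun j k h => Fin.ext (hw.injOn (Nat.lt_succ_iff.1 j.isLt)
      (Nat.lt_succ_iff.1 k.isLt) h)⟩, fun {j k} => ?_⟩
  change G.Adj (w j) (w k) ↔ _
  rcases lt_trichotomy j k with hjk | rfl | hjk
  · have := cycleGraph_adj_natCast_iff hjk k.isLt
    rw [Fin.cast_val_eq_self, Fin.cast_val_eq_self] at this
    rw [this, hadj_iff hjk (Nat.lt_succ_iff.1 k.isLt), Nat.add_sub_cancel]
  · simp
  · have := cycleGraph_adj_natCast_iff hjk j.isLt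
    rw [Fin.cast_val_eq_self, Fin.cast_val_eq_self] at this
    rw [G.adj_comm, (cycleGraph _).adj_comm, this, hadj_iff hjk (Nat.lt_succ_iff.1 j.isLt),
      Nat.add_sub_cancel]

lemma exists_chord_at_end (hG : IsChordal G) {l : ℕ} {w : ℕ → V} (hw : IsCycleSeq G w l)
    (hl : 3 ≤ l) : ∃ s t, IsDiagonal l s t ∧ G.Adj (w s) (w t) ∧ (s = 0 ∨ t = l) := by
  induction l using Nat.strong_induction_on generalizing w with
  | _ l ih =>
  obtain ⟨s, t, hst, hadj⟩ := hG.exists_chord hw hl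
  by_cases hend : s = 0 ∨ t = l
  · exact ⟨s, t, hst, hadj, hend⟩
  obtain ⟨hst, htl, -⟩ := hst
  obtain ⟨hs, ht⟩ : 0 < s ∧ t < l := by omega
  -- shortcut the cycle along the chord, dropping `w (s + 1), …, w (t - 1)`
  set f : ℕ → ℕ := fun u => if u ≤ s then u else u + (t - s - 1) with hf_def
  have hf : StrictMono f := fun a b hab => by simp only [hf_def]; split_ifs <;> omega
  have hfl : f (l - (t - s - 1)) = l := by simp only [hf_def]; split_ifs <;> omega
  have hW : IsCycleSeq G (w ∘ f) (l - (t - s - 1)) := by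
    refine hw.comp_strictMono hf (by simp [hf_def]) hfl fun u hu => ?_
    by_cases hus : u = s
    · subst hus
      right
      simpa [hf_def, show u + 1 + (t - u - 1) = t by omega] using hadj
    · left
      simp only [hf_def]
      split_ifs <;> omega
  obtain ⟨a, b, hab, hadj', hend'⟩ := ih _ (by omega) hW (by omega)
  refine ⟨f a, f b, hab.strictMono_map hf hfl, hadj', ?_⟩
  rcases hend' with rfl | rfl
  · simp [hf_def]
  · exact Or.inr hfl

end IsChordal

lemma removeInside_le (G : SimpleGraph V) (I : Set V) : removeInside G I ≤ G :=
  fun _ _ h => h.1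

namespace SimpleGraph.Embedding

variable {H : SimpleGraph V} {n : ℕ} [NeZero n]

lemma adj_add_natCast_iff (e : cycleGraph n ↪g H) (a : Fin n) {s t : ℕ} (hst : s < t)
    (ht : t < n) : H.Adj (e (a + s)) (e (a + t)) ↔ ¬IsDiagonal (n - 1) s t := by
  rw [e.map_adj_iff, cycleGraph_adj_add_left, cycleGraph_adj_natCast_iff hst ht]

lemma isCycleSeq_add_natCast (e : cycleGraph n ↪g H) (a : Fin n) (hn : 2 ≤ n) :
    IsCycleSeq H (fun u : ℕ => e (a + u)) (n - 1) where
  injOn s hs t ht h := by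
    have hst : (s : Fin n) = t := add_left_cancel (e.injective h)
    rwa [Fin.ext_iff, Fin.val_cast_of_lt (by simp at hs; omega),
      Fin.val_cast_of_lt (by simp at ht; omega)] at hst
  adj_succ s hs :=
    (e.adj_add_natCast_iff a s.lt_succ_self (by omega)).2 (by unfold IsDiagonal; omega)
  adj_last := ((e.adj_add_natCast_iff a (s := 0) (by omega) (by omega)).2
    (by unfold IsDiagonal; omega)).symm

end SimpleGraph.Embedding

lemma IsChordal.mem_or_mem_of_hole {G : SimpleGraph V} (hG : IsChordal G) {I : Set V} {n : ℕ}
    [NeZero n] (hn : 4 ≤ n) (e : cycleGraph n ↪g removeInside G I) (a : Fin n) :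
    e a ∈ I ∨ e (a - 1) ∈ I := by
  by_contra! hout
  set w : ℕ → V := fun u => e (a + u) with hw_def
  have hw := (e.isCycleSeq_add_natCast a (by omega)).mono (removeInside_le G I)
  obtain ⟨s, t, hst, hadj, hend⟩ := hG.exists_chord_at_end hw (by omega)
  -- a chord of `G` is not an edge of `removeInside G I`, so it lies inside `I`
  have hI : w s ∈ I ∧ w t ∈ I := by
    by_contra hI
    exact (e.adj_add_natCast_iff a (by unfold IsDiagonal at hst; omega)
      (by unfold IsDiagonal at hst; omega)).1 ⟨hadj, hI⟩ hst
  have hw0 : w 0 = e a := by simp [hw_def]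
  have hwl : w (n - 1) = e (a - 1) := by
    have hcast : ((n - 1 : ℕ) : Fin n) = -1 :=
      eq_neg_of_add_eq_zero_left (by rw [← Nat.cast_add_one, Nat.sub_add_cancel (by omega),
        Fin.natCast_self])
    simp [hw_def, hcast, sub_eq_add_neg]
  rcases hend with rfl | rfl
  · exact hout.1 (hw0 ▸ hI.1)
  · exact hout.2 (hwl ▸ hI.2)

/-- If `G` is chordal and `I ⊆ V(G)`, then `G′ = G − E(G[I])` has no odd hole. -/
theorem stmt13 (G : SimpleGraph V) (hG : IsChordal G) (I : Set V) :
    ¬ HasOddHole (removeInside G I) := by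
  classical
  rintro ⟨n, hn, hodd, ⟨e⟩⟩
  obtain ⟨m, rfl⟩ : ∃ m, n = m + 2 := ⟨n - 2, by omega⟩
  let c : (cycleGraph (m + 2)).Coloring Bool :=
    Coloring.mk (fun i => decide (e i ∈ I)) fun {i j} hij => by
      have hnot : ¬(e i ∈ I ∧ e j ∈ I) := (e.map_adj_iff.2 hij).2
      have hone : e i ∈ I ∨ e j ∈ I := by
        rcases cycleGraph_adj.1 hij with h | h
        · simpa [← h] using hG.mem_or_mem_of_hole (by omega) e i
        · simpa [← h, or_comm] using hG.mem_or_mem_of_hole (by omega) e j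
      simp only [ne_eq, decide_eq_decide]
      tauto
  have h2 := c.colorable.chromaticNumber_le
  rw [chromaticNumber_cycleGraph_of_odd _ (by omega) hodd] at h2
  exact absurd h2 (by decide)
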